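/- Let p be a prime and let K be a reduced commutative ring of characteristic p. Write f ∈ K[x] uniquely as f = Σ_{i=0}^{p-1} λ_i x^i with λ_i ∈ K[x^p] (using the decomposition K[x] = ⊕_{i=0}^{p-1} K[x^p] x^i). Then in the first Weyl algebra A_1(K) one has (∂ + f)^p = ∂^p − λ_{p-1} + f^p. -/

import Mathlib

/-!
Left multiplication by `∂ + f` is the sum of right multiplication by `∂` and of
`E = ad ∂ + f`, and these two operators commute; in characteristic `p` this gives
`(∂ + f)^p = ∂^p + E^p(1)`. Since `E` maps `g(x)` to `(g' + f g)(x)`, it remains to compute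
`T^p(1)` for `T = d/dx + f` on `K[x]`. Put a parameter `t` in front of `f`: the `t`-derivative
of `(d/dx + t f)^n(1)` is `∑_j C(n, j+1) f^{(j)} (d/dx + t f)^{n-1-j}(1)`, which for `n = p` is
the constant `f^{(p-1)}`. Hence `T^p(1) = f^{(p-1)} + f^p`. Finally the `λ_i` have derivative
zero, so `f^{(p-1)} = (p-1)! λ_{p-1} = -λ_{p-1}` by Wilson's theorem.
-/

noncomputable section

open Polynomial

/-- The defining relation of the first Weyl algebra: `∂·x = x·∂ + 1`. -/
inductive WeylRel (K : Type*) [CommRing K] :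
    FreeAlgebra K (Fin 2) → FreeAlgebra K (Fin 2) → Prop
  | rel : WeylRel K (FreeAlgebra.ι K 1 * FreeAlgebra.ι K 0)
      (FreeAlgebra.ι K 0 * FreeAlgebra.ι K 1 + 1)

/-- The first Weyl algebra `A₁(K) = K⟨x, ∂ | ∂x − x∂ = 1⟩`. -/
abbrev Weyl (K : Type*) [CommRing K] := RingQuot (WeylRel K)

/-- The generator `x` of the first Weyl algebra. -/
def wX (K : Type*) [CommRing K] : Weyl K :=
  RingQuot.mkAlgHom K (WeylRel K) (FreeAlgebra.ι K 0)

/-- The generator `∂` of the first Weyl algebra. -/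
def wD (K : Type*) [CommRing K] : Weyl K :=
  RingQuot.mkAlgHom K (WeylRel K) (FreeAlgebra.ι K 1)

open Finset
open scoped Differential

theorem add_pow_prime_eq_pow_add_iterate {W : Type*} [Ring W] {p : ℕ} (hp : p.Prime)
    (hpW : (p : W) = 0) (d a : W) :
    (d + a) ^ p = d ^ p + (fun w => d * w - w * d + a * w)^[p] 1 := by
  let ρ : Module.End ℤ W := LinearMap.mulRight ℤ d
  let E : Module.End ℤ W := LinearMap.mulLeft ℤ (d + a) - ρ
  have hE : ⇑E = fun w => d * w - w * d + a * w := by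
    ext w
    simp only [E, ρ, LinearMap.sub_apply, LinearMap.mulLeft_apply, LinearMap.mulRight_apply]
    noncomm_ring
  have hcomm : Commute ρ E := by
    ext w; simp [ρ, E, mul_sub, sub_mul, mul_assoc]
  have key := congr($(hcomm.add_pow_prime_eq hp) 1)
  rw [add_sub_cancel] at key
  simpa only [ρ, LinearMap.pow_mulLeft, LinearMap.pow_mulRight, LinearMap.add_apply,
    Module.End.mul_apply, Module.End.natCast_apply, LinearMap.mulLeft_apply,
    LinearMap.mulRight_apply, Module.End.coe_pow, one_mul, mul_one, nsmul_eq_mul, hpW, zero_mul,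
    add_zero, hE] using key

theorem natCast_factorial_pred_eq_neg_one {R : Type*} [Ring R] {p : ℕ} [CharP R p]
    (hp : p.Prime) : ((p - 1).factorial : R) = -1 := by
  have := Fact.mk hp
  have h := congr_arg (ZMod.castHom (dvd_refl p) R) (ZMod.wilsons_lemma (p := p))
  rwa [map_natCast, map_neg, map_one] at h

namespace Polynomial

variable {R : Type*} [CommRing R]

theorem coeff_eq_of_derivative_eq {p : ℕ} [CharP R p] (hp : p.Prime) {q r : R[X]}
    (h : derivative q = derivative r) {i : ℕ} (hi : ¬p ∣ i) : q.coeff i = r.coeff i := by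
  obtain ⟨k, rfl⟩ := Nat.exists_eq_succ_of_ne_zero (n := i) fun h => hi (h ▸ dvd_zero p)
  have hu : IsUnit ((k + 1 : ℕ) : R) := (CharP.isUnit_natCast_iff hp).2 hi
  have hk := congr_arg (coeff · k) h
  simp only [coeff_derivative] at hk
  exact hu.mul_right_cancel (by exact_mod_cast hk)

theorem iterate_derivative_mul_of_derivative_eq_zero {c : R[X]} (hc : derivative c = 0)
    (q : R[X]) (m : ℕ) : derivative^[m] (c * q) = c * derivative^[m] q := by
  induction m with
  | zero => rfl
  | succ m ih => simp [Function.iterate_succ_apply', ih, hc]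

theorem iterate_derivative_sum_expand_mul_X_pow {p : ℕ} [CharP R p] (hp : p.Prime)
    (l : ℕ → R[X]) :
    derivative^[p - 1] (∑ i ∈ range p, expand R p (l i) * X ^ i) = -expand R p (l (p - 1)) := by
  have hexpand (g : R[X]) : derivative (expand R p g) = 0 := by
    simp [derivative_expand]
  rw [iterate_derivative_sum, sum_eq_single (p - 1)]
  · rw [iterate_derivative_mul_of_derivative_eq_zero (hexpand _),
      iterate_derivative_X_pow_eq_natCast_mul, Nat.descFactorial_self, Nat.sub_self, pow_zero,
      natCast_factorial_pred_eq_neg_one hp, mul_one, mul_neg_one]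
  · intro i hi hne
    rw [iterate_derivative_mul_of_derivative_eq_zero (hexpand _),
      iterate_derivative_X_pow_eq_natCast_mul,
      Nat.descFactorial_eq_zero_iff_lt.2 (by grind), Nat.cast_zero, zero_mul,
      mul_zero]
  · simp [hp.pos]

end Polynomial

namespace Differential

variable {A : Type*} [CommRing A] [Differential A]

theorem derivative_mapCoeffs (q : A[X]) :
    derivative (mapCoeffs q) = mapCoeffs (derivative q) := by
  ext i
  simp [coeff_derivative, mul_comm]

theorem mapCoeffs_C_mul (c : A) (q : A[X]) :
    mapCoeffs (C c * q) = C c′ * q + C c * mapCoeffs q := by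
  rw [Derivation.leibniz, mapCoeffs_C, smul_eq_mul, smul_eq_mul]
  ring

theorem eval_one_mapCoeffs (q : A[X]) : (mapCoeffs q).eval 1 = (q.eval 1)′ := by
  simpa [← coe_aeval_eq_eval] using (deriv_aeval_eq (1 : A) q).symm

/-- `twistPoly b n = (∂ + t b)ⁿ 1 ∈ A[t]`, with `∂` acting on coefficients; its coefficient
of `tⁱ` is the part of `(∂ + b)ⁿ 1` of degree `i` in `b`. -/
def twistPoly (b : A) : ℕ → A[X]
  | 0 => 1
  | n + 1 => mapCoeffs (twistPoly b n) + C b * X * twistPoly b n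

variable (b : A)

theorem eval_one_twistPoly (n : ℕ) :
    (twistPoly b n).eval 1 = (fun g => g′ + b * g)^[n] 1 := by
  induction n with
  | zero => simp [twistPoly]
  | succ n ih => simp [twistPoly, Function.iterate_succ_apply', eval_one_mapCoeffs, ih]

theorem coeff_twistPoly_succ_zero (n : ℕ) : (twistPoly b (n + 1)).coeff 0 = 0 := by
  induction n with
  | zero => simp [twistPoly]
  | succ n ih =>
    have : (twistPoly b (n + 2)).coeff 0 = ((twistPoly b (n + 1)).coeff 0)′ := by
      simp [twistPoly, mul_assoc]
    rw [this, ih, map_zero]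

theorem coeff_twistPoly_of_lt {n i : ℕ} (h : n < i) : (twistPoly b n).coeff i = 0 := by
  induction n generalizing i with
  | zero => simp [twistPoly, coeff_one, h.ne']
  | succ n ih =>
    obtain ⟨i, rfl⟩ : ∃ j, i = j + 1 := ⟨i - 1, by omega⟩
    simp [twistPoly, mul_assoc, ih (by omega : n < i + 1), ih (by omega : n < i)]

theorem coeff_twistPoly_self (n : ℕ) : (twistPoly b n).coeff n = b ^ n := by
  induction n with
  | zero => simp [twistPoly]
  | succ n ih => simp [twistPoly, mul_assoc, coeff_twistPoly_of_lt, ih, pow_succ']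

theorem derivative_twistPoly_succ (n : ℕ) :
    derivative (twistPoly b (n + 1)) = ∑ ij ∈ antidiagonal n,
      (n + 1).choose (ij.1 + 1) • (C ((⇑Differential.deriv)^[ij.1] b) * twistPoly b ij.2) := by
  induction n with
  | zero => simp [twistPoly]
  | succ n ih =>
    have hstep : derivative (twistPoly b (n + 2)) = C b * twistPoly b (n + 1) +
        ∑ ij ∈ antidiagonal n, (n + 1).choose (ij.1 + 1) •
          (C ((⇑Differential.deriv)^[ij.1 + 1] b) * twistPoly b ij.2 +
            C ((⇑Differential.deriv)^[ij.1] b) * twistPoly b (ij.2 + 1)) := by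
      rw [twistPoly, derivative_add, derivative_mapCoeffs, derivative_mul, ih, map_sum, mul_sum,
        derivative_C_mul_X, add_left_comm, ← sum_add_distrib]
      congr 1
      refine sum_congr rfl fun ij _ => ?_
      rw [map_nsmul, mapCoeffs_C_mul, twistPoly, Function.iterate_succ_apply']
      simp only [nsmul_eq_mul]
      ring
    have hpascal : ∑ ij ∈ antidiagonal (n + 1), (n + 2).choose (ij.1 + 1) •
          (C ((⇑Differential.deriv)^[ij.1] b) * twistPoly b ij.2) =
        ∑ ij ∈ antidiagonal (n + 1), (n + 1).choose ij.1 •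
          (C ((⇑Differential.deriv)^[ij.1] b) * twistPoly b ij.2) +
        ∑ ij ∈ antidiagonal (n + 1), (n + 1).choose (ij.1 + 1) •
          (C ((⇑Differential.deriv)^[ij.1] b) * twistPoly b ij.2) := by
      rw [← sum_add_distrib]
      exact sum_congr rfl fun _ _ => by rw [Nat.choose_succ_succ', add_smul]
    rw [hstep, hpascal, Nat.sum_antidiagonal_succ, Nat.sum_antidiagonal_succ']
    simp only [Function.iterate_succ_apply', Nat.choose_zero_right, Function.iterate_zero, id_eq,
      one_smul, Nat.choose_succ_self, zero_smul, zero_add, smul_add, sum_add_distrib]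
    abel

variable {p : ℕ} [CharP A p]

theorem derivative_twistPoly_prime (hp : p.Prime) :
    derivative (twistPoly b p) = C ((⇑Differential.deriv)^[p - 1] b) := by
  obtain ⟨n, rfl⟩ := Nat.exists_eq_succ_of_ne_zero hp.ne_zero
  rw [derivative_twistPoly_succ, sum_eq_single (n, 0)]
  · simp [twistPoly]
  · rintro ⟨i, j⟩ hij hne
    rw [HasAntidiagonal.mem_antidiagonal] at hij
    have hi : i < n := by
      by_contra!
      exact hne (Prod.ext (by simp only; omega) (by simp only; omega))
    rw [nsmul_eq_mul, (CharP.cast_eq_zero_iff A[X] (n + 1) _).2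
      (hp.dvd_choose_self (by omega) (by omega)), zero_mul]
  · simp

theorem twistPoly_prime (hp : p.Prime) :
    twistPoly b p = C ((⇑Differential.deriv)^[p - 1] b) * X + C (b ^ p) * X ^ p := by
  have hderiv : derivative (twistPoly b p) =
      derivative (C ((⇑Differential.deriv)^[p - 1] b) * X + C (b ^ p) * X ^ p) := by
    simp [derivative_twistPoly_prime b hp, derivative_X_pow, -map_pow]
  ext i
  rcases Nat.eq_zero_or_pos i with rfl | hi0
  · obtain ⟨n, rfl⟩ := Nat.exists_eq_succ_of_ne_zero hp.ne_zero
    simp [coeff_twistPoly_succ_zero]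
  rcases lt_trichotomy i p with hlt | rfl | hgt
  · exact coeff_eq_of_derivative_eq hp hderiv (Nat.not_dvd_of_pos_of_lt hi0 hlt)
  · simp [coeff_twistPoly_self, coeff_X, hp.one_lt.ne, -map_pow]
  · simp [coeff_twistPoly_of_lt b hgt, coeff_X, hgt.ne', (hp.one_lt.trans hgt).ne, -map_pow]

theorem iterate_deriv_add_mul_one_prime (hp : p.Prime) :
    (fun g => g′ + b * g)^[p] 1 = (⇑Differential.deriv)^[p - 1] b + b ^ p := by
  rw [← eval_one_twistPoly, twistPoly_prime b hp]
  simp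

theorem add_map_pow_prime {W : Type*} [Ring W] (hp : p.Prime) (φ : A →+* W) (d : W)
    (hd : ∀ g, d * φ g - φ g * d = φ g′) :
    (d + φ b) ^ p = d ^ p + φ ((⇑Differential.deriv)^[p - 1] b) + φ b ^ p := by
  have hpW : (p : W) = 0 := by rw [← map_natCast φ, CharP.cast_eq_zero, map_zero]
  have hsemi : Function.Semiconj φ (fun g => g′ + b * g) (fun w => d * w - w * d + φ b * w) :=
    fun g => by simp [hd]
  have hiter := hsemi.iterate_right p 1
  rw [map_one] at hiter
  rw [add_pow_prime_eq_pow_add_iterate hp hpW, ← hiter, iterate_deriv_add_mul_one_prime b hp,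
    map_add, map_pow, add_assoc]

end Differential

theorem wD_mul_wX (K : Type*) [CommRing K] : wD K * wX K = wX K * wD K + 1 := by
  simpa [wX, wD] using RingQuot.mkAlgHom_rel K (WeylRel.rel (K := K))

theorem wD_mul_aeval_sub_aeval_mul_wD (K : Type*) [CommRing K] (g : K[X]) :
    wD K * aeval (wX K) g - aeval (wX K) g * wD K = aeval (wX K) (derivative g) := by
  induction g using Polynomial.induction_on with
  | C a => simp [Algebra.commutes]
  | add g h hg hh =>
    simp only [map_add, mul_add, add_mul, ← hg, ← hh]
    abel
  | monomial n a ih =>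
    rw [pow_succ, ← mul_assoc]
    generalize C a * X ^ n = q at ih ⊢
    rw [derivative_mul, derivative_X, mul_one, map_add, map_mul, map_mul, aeval_X, ← ih, sub_mul,
      mul_assoc _ (wD K), wD_mul_wX]
    noncomm_ring

theorem statement1_general (p : ℕ) (hp : p.Prime) (K : Type*) [CommRing K] [CharP K p]
    (l : ℕ → Polynomial K) (f : Polynomial K)
    (hf : f = ∑ i ∈ Finset.range p, Polynomial.expand K p (l i) * Polynomial.X ^ i) :
    (wD K + aeval (wX K) f) ^ p =
      wD K ^ p - aeval (wX K) (Polynomial.expand K p (l (p - 1))) + aeval (wX K) f ^ p := by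
  let : Differential K[X] := ⟨derivative'.restrictScalars ℤ⟩
  have hjacobson := Differential.add_map_pow_prime f hp (aeval (wX K)).toRingHom (wD K)
    (wD_mul_aeval_sub_aeval_mul_wD K)
  have hderiv : (⇑Differential.deriv)^[p - 1] f = -expand K p (l (p - 1)) :=
    hf ▸ iterate_derivative_sum_expand_mul_X_pow hp l
  simpa [hderiv, sub_eq_add_neg] using hjacobson

/-- The element `λ_i ∈ K[x^p]` is encoded as `Polynomial.expand K p (l i)`, i.e. as
`(l i)(x^p)`, and the decomposition `f = Σ_{i=0}^{p-1} λ_i x^i` is the hypothesis `hf`. -/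
theorem statement1 (p : ℕ) (hp : p.Prime) (K : Type*) [CommRing K] [IsReduced K] [CharP K p]
    (l : ℕ → Polynomial K) (f : Polynomial K)
    (hf : f = ∑ i ∈ Finset.range p, Polynomial.expand K p (l i) * Polynomial.X ^ i) :
    (wD K + aeval (wX K) f) ^ p =
      wD K ^ p - aeval (wX K) (Polynomial.expand K p (l (p - 1))) + aeval (wX K) f ^ p :=
  statement1_general p hp K l f hf
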